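/- arXiv:1705.01999 — 3 statements merged into one kernel-verified Lean document; each statement's English description precedes it below -/
import Mathlib

section
/- Let F ∈ ℤ[x₁,…,xₙ] be a quadratic form, M a positive integer with factorization M = M₁M₂ into coprime parts, and q = q₁q₂ with gcd(q₁M₁, q₂M₂) = 1. Choose integers s, t with lcm(q₁,M₁)·s + lcm(q₂,M₂)·t = 1. Then the exponential sum S_{q₁q₂,M}(c) factors as S_{q₁,M₁}(tc)·S_{q₂,M₂}(sc), where S_{q,M}(c) = Σ*_{a mod q} Σ_{y mod lcm(q,M), [y]_M ∈ Ω_M} e_q(aF(y)) e_{lcm(q,M)}(c·y). -/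
open MvPolynomial Finset

/-- `e_q(x) = exp(2πi x/q)`. -/
noncomputable def eFun (q : ℕ) (x : ℤ) : ℂ := Complex.exp (2 * Real.pi * Complex.I * x / q)

/-- The exponential sum `S_{q,M}(c) = Σ*_{a mod q} Σ_{y mod lcm(q,M), [y]_M ∈ Ω_M}
`e_q(aF(y)) e_{lcm(q,M)}(c·y)`. -/
noncomputable def expSum (n : ℕ) (F : MvPolynomial (Fin n) ℤ) (q M : ℕ)
    (Ω : Set (Fin n → ZMod M)) [DecidablePred (· ∈ Ω)] (c : Fin n → ℤ) : ℂ :=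
  ∑ a ∈ (Finset.range q).filter (fun a => Nat.Coprime a q),
    ∑ y ∈ Fintype.piFinset (fun _ : Fin n => Finset.range (Nat.lcm q M)),
      if (fun i => ((y i : ℤ) : ZMod M)) ∈ Ω then
        eFun q (a * eval (fun i => (y i : ℤ)) F)
          * eFun (Nat.lcm q M) (∑ i, c i * (y i : ℤ))
      else 0

/-! Carrying out the sum over `a` first writes `S_{q,M}(c)` as
`Σ_y 1_Ω(y) c_q(F(y)) e_L(c·y)`, where `c_q` is the Ramanujan sum and `L = lcm(q,M)`.
Ramanujan sums are multiplicative in `q`, the Bézout relation splits `e_{L₁L₂}` as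
`e_{L₁}(t·) e_{L₂}(s·)`, and `Ω` splits by hypothesis, so for `q = q₁q₂`, `M = M₁M₂` the summand
is a function of `y mod L₁` times a function of `y mod L₂`. The Chinese remainder theorem
then factors the sum over `y mod L₁L₂`. -/

lemma eFun_add (q : ℕ) (x y : ℤ) : eFun q (x + y) = eFun q x * eFun q y := by
  unfold eFun; rw [← Complex.exp_add]; congr 1; push_cast; ring

lemma eFun_mul_mul_right (A : ℕ) {B : ℕ} (hB : B ≠ 0) (x : ℤ) :
    eFun (A * B) (x * B) = eFun A x := by
  have hB' : (B : ℂ) ≠ 0 := Nat.cast_ne_zero.mpr hB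
  unfold eFun; congr 1
  push_cast
  rcases eq_or_ne (A : ℂ) 0 with h | h
  · simp [h]
  · field_simp

lemma eFun_congr (q : ℕ) {x y : ℤ} (h : (x : ZMod q) = y) : eFun q x = eFun q y := by
  rcases eq_or_ne q 0 with rfl | hq
  · exact congrArg _ h
  · have : NeZero q := ⟨hq⟩
    simp only [eFun, ← ZMod.stdAddChar_coe, h]

lemma eFun_mul_split {A B : ℕ} (hA : A ≠ 0) (hB : B ≠ 0) {u v : ℤ}
    (huv : (A : ℤ) * u + B * v = 1) (x : ℤ) :
    eFun (A * B) x = eFun A (v * x) * eFun B (u * x) := by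
  have hx : x = v * x * B + u * x * A := by linear_combination x * huv.symm
  conv_lhs => rw [hx]
  rw [eFun_add, eFun_mul_mul_right A hB, mul_comm A B, eFun_mul_mul_right B hA]

lemma Nat.Coprime.coprime_lcm_lcm {a b c d : ℕ} (h : Nat.Coprime (a * c) (b * d)) :
    Nat.Coprime (Nat.lcm a c) (Nat.lcm b d) :=
  (h.coprime_dvd_left (Nat.lcm_dvd_mul a c)).coprime_dvd_right (Nat.lcm_dvd_mul b d)

lemma Nat.Coprime.lcm_mul_mul {a b c d : ℕ} (h : Nat.Coprime (a * c) (b * d)) :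
    Nat.lcm (a * b) (c * d) = Nat.lcm a c * Nat.lcm b d := by
  refine Nat.dvd_antisymm ?_ ?_
  · exact Nat.lcm_dvd (mul_dvd_mul (Nat.dvd_lcm_left a c) (Nat.dvd_lcm_left b d))
      (mul_dvd_mul (Nat.dvd_lcm_right a c) (Nat.dvd_lcm_right b d))
  · exact h.coprime_lcm_lcm.mul_dvd_of_dvd_of_dvd
      (lcm_dvd_lcm (Nat.dvd_mul_right a b) (Nat.dvd_mul_right c d))
      (lcm_dvd_lcm (Nat.dvd_mul_left b a) (Nat.dvd_mul_left d c))

lemma Equiv.sum_comp_mul_comp {α β γ R : Type*} [Fintype α] [Fintype β] [Fintype γ]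
    [CommSemiring R] (e : α ≃ β × γ) (f : β → R) (g : γ → R) :
    ∑ x, f (e x).1 * g (e x).2 = (∑ b, f b) * ∑ c, g c := by
  rw [Fintype.sum_mul_sum, ← Fintype.sum_prod_type', e.sum_comp (fun p => f p.1 * g p.2)]

lemma sum_range_eq_sum_zmod {R : Type*} [AddCommMonoid R] (N : ℕ) [NeZero N] (f : ℕ → R) :
    ∑ a ∈ range N, f a = ∑ x : ZMod N, f x.val := by
  obtain ⟨k, rfl⟩ := Nat.exists_eq_succ_of_ne_zero (NeZero.ne N)
  exact (Fin.sum_univ_eq_sum_range f _).symm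

lemma sum_piFinset_range_eq_sum_zmod {ι R : Type*} [Fintype ι] [DecidableEq ι] [AddCommMonoid R]
    (N : ℕ) [NeZero N] (f : (ι → ℕ) → R) :
    ∑ y ∈ Fintype.piFinset (fun _ => range N), f y = ∑ y : ι → ZMod N, f (fun i => (y i).val) := by
  symm
  refine Finset.sum_nbij' (fun y i => (y i).val) (fun y i => (y i : ZMod N)) ?_ ?_ ?_ ?_ ?_
  · simp [ZMod.val_lt]
  · simp
  · intro y _; simp
  · intro y hy
    simp only [Fintype.mem_piFinset, mem_range] at hy
    funext i; exact ZMod.val_cast_of_lt (hy i)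
  · intro y _; rfl

lemma ZMod.val_modEq_val_cast {N d : ℕ} [NeZero N] [NeZero d] (x : ZMod N) :
    x.val ≡ (ZMod.cast x : ZMod d).val [MOD d] := by
  rw [← ZMod.natCast_eq_natCast_iff, ZMod.natCast_val, ZMod.natCast_zmod_val]

lemma ZMod.chineseRemainder_apply {m n : ℕ} (h : m.Coprime n) (x : ZMod (m * n)) :
    ZMod.chineseRemainder h x = (ZMod.cast x, ZMod.cast x) :=
  Prod.ext (Prod.fst_zmod_cast x) (Prod.snd_zmod_cast x)

lemma sum_piFinset_range_mul_of_coprime {ι R : Type*} [Fintype ι] [DecidableEq ι]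
    [CommSemiring R] {N₁ N₂ : ℕ} [NeZero N₁] [NeZero N₂] (h : N₁.Coprime N₂)
    (f g : (ι → ℕ) → R) (hf : ∀ y y', (∀ i, y i ≡ y' i [MOD N₁]) → f y = f y')
    (hg : ∀ y y', (∀ i, y i ≡ y' i [MOD N₂]) → g y = g y') :
    ∑ y ∈ Fintype.piFinset (fun _ => range (N₁ * N₂)), f y * g y
      = (∑ y ∈ Fintype.piFinset (fun _ => range N₁), f y)
        * ∑ y ∈ Fintype.piFinset (fun _ => range N₂), g y := by
  simp only [sum_piFinset_range_eq_sum_zmod]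
  rw [← ((Equiv.piCongrRight fun _ => (ZMod.chineseRemainder h).toEquiv).trans
    (Equiv.arrowProdEquivProdArrow _ _ _)).sum_comp_mul_comp]
  refine Fintype.sum_congr _ _ fun y => ?_
  congr 1
  · exact hf _ _ fun i => by
      simpa [ZMod.chineseRemainder_apply] using ZMod.val_modEq_val_cast (y i)
  · exact hg _ _ fun i => by
      simpa [ZMod.chineseRemainder_apply] using ZMod.val_modEq_val_cast (y i)

noncomputable def ramanujanSum (q : ℕ) (m : ℤ) : ℂ :=
  ∑ a ∈ (range q).filter (fun a => Nat.Coprime a q), eFun q (a * m)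

lemma ramanujanSum_congr (q : ℕ) {m m' : ℤ} (h : (m : ZMod q) = m') :
    ramanujanSum q m = ramanujanSum q m' :=
  Finset.sum_congr rfl fun a _ => eFun_congr q (by push_cast; rw [h])

lemma ramanujanSum_eq_sum_zmod (q : ℕ) [NeZero q] (m : ℤ) :
    ramanujanSum q m = ∑ x : ZMod q, if IsUnit x then eFun q (x.val * m) else 0 := by
  rw [ramanujanSum, sum_filter, sum_range_eq_sum_zmod]
  simp only [← ZMod.isUnit_iff_coprime, ZMod.natCast_zmod_val]

lemma ramanujanSum_mul_of_isCoprime (q : ℕ) [NeZero q] {v : ℤ} (hv : IsCoprime v q) (m : ℤ) :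
    ramanujanSum q (v * m) = ramanujanSum q m := by
  obtain ⟨a, b, hab⟩ := hv
  have hu : IsUnit (v : ZMod q) :=
    IsUnit.of_mul_eq_one (a : ZMod q) (by
      have := congrArg (Int.cast : ℤ → ZMod q) hab
      push_cast at this
      rwa [ZMod.natCast_self, mul_zero, add_zero, mul_comm] at this)
  rw [ramanujanSum_eq_sum_zmod, ramanujanSum_eq_sum_zmod,
    ← Equiv.sum_comp (Units.mulLeft hu.unit) fun x => if IsUnit x then eFun q (x.val * m) else 0]
  refine Fintype.sum_congr _ _ fun x => ?_
  simp only [Units.mulLeft_apply, IsUnit.unit_spec, IsUnit.mul_iff, hu, true_and]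
  refine if_ctx_congr Iff.rfl (fun _ => eFun_congr q ?_) fun _ => rfl
  simp only [ZMod.natCast_val, Int.cast_mul, ZMod.intCast_cast, ZMod.cast_id', id_eq]
  ring

lemma ramanujanSum_mul {q₁ q₂ : ℕ} [NeZero q₁] [NeZero q₂] (h : q₁.Coprime q₂) (m : ℤ) :
    ramanujanSum (q₁ * q₂) m = ramanujanSum q₁ m * ramanujanSum q₂ m := by
  obtain ⟨u₁, u₂, hu⟩ := Nat.isCoprime_iff_coprime.mpr h
  -- `e_{q₁q₂}(x) = e_{q₁}(u₂x) e_{q₂}(u₁x)`; the units `u₂ mod q₁`, `u₁ mod q₂` are absorbed first.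
  rw [← ramanujanSum_mul_of_isCoprime q₁ (v := u₂) ⟨q₂, u₁, by linear_combination hu⟩ m,
    ← ramanujanSum_mul_of_isCoprime q₂ (v := u₁) ⟨q₁, u₂, by linear_combination hu⟩ m,
    ramanujanSum_eq_sum_zmod, ramanujanSum_eq_sum_zmod, ramanujanSum_eq_sum_zmod,
    ← (ZMod.chineseRemainder h).toEquiv.sum_comp_mul_comp]
  refine Fintype.sum_congr _ _ fun x => ?_
  have hunit : IsUnit x ↔ IsUnit (ZMod.cast x : ZMod q₁) ∧ IsUnit (ZMod.cast x : ZMod q₂) := by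
    rw [← MulEquiv.isUnit_map (ZMod.chineseRemainder h), ZMod.chineseRemainder_apply,
      Prod.isUnit_iff]
  rw [RingEquiv.toEquiv_eq_coe, EquivLike.coe_coe, ZMod.chineseRemainder_apply,
    ite_zero_mul_ite_zero,
    eFun_mul_split (NeZero.ne q₁) (NeZero.ne q₂) (u := u₁) (v := u₂) (by linear_combination hu)]
  refine if_ctx_congr hunit (fun _ => ?_) fun _ => rfl
  congr 1 <;> refine eFun_congr _ ?_ <;>
    simp only [Int.cast_mul, ZMod.natCast_val, ZMod.intCast_cast, ZMod.cast_id', id_eq] <;> ring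

lemma map_eval_congr {σ R S : Type*} [CommSemiring R] [CommSemiring S] (φ : R →+* S)
    (F : MvPolynomial σ R) {y z : σ → R} (h : ∀ i, φ (y i) = φ (z i)) :
    φ (eval y F) = φ (eval z F) := by
  rw [← eval₂_id, ← eval₂_id, eval₂_comp_left, eval₂_comp_left]
  congr 1
  exact funext h

noncomputable def expSumTerm (n : ℕ) (F : MvPolynomial (Fin n) ℤ) (q M : ℕ)
    (Ω : Set (Fin n → ZMod M)) [DecidablePred (· ∈ Ω)] (c : Fin n → ℤ) (y : Fin n → ℕ) : ℂ :=
  if (fun i => ((y i : ℤ) : ZMod M)) ∈ Ω then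
    ramanujanSum q (eval (fun i => (y i : ℤ)) F) * eFun (Nat.lcm q M) (∑ i, c i * (y i : ℤ))
  else 0

section expSumTerm

variable {n : ℕ} (F : MvPolynomial (Fin n) ℤ)

lemma expSum_eq_sum_expSumTerm (q M : ℕ) (Ω : Set (Fin n → ZMod M)) [DecidablePred (· ∈ Ω)]
    (c : Fin n → ℤ) :
    expSum n F q M Ω c
      = ∑ y ∈ Fintype.piFinset (fun _ => range (Nat.lcm q M)), expSumTerm n F q M Ω c y := by
  rw [expSum, Finset.sum_comm]
  refine Finset.sum_congr rfl fun y _ => ?_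
  unfold expSumTerm ramanujanSum
  split_ifs <;> simp [Finset.sum_mul]

lemma expSumTerm_congr (q M : ℕ) (Ω : Set (Fin n → ZMod M)) [DecidablePred (· ∈ Ω)]
    (c : Fin n → ℤ) {y y' : Fin n → ℕ} (h : ∀ i, y i ≡ y' i [MOD Nat.lcm q M]) :
    expSumTerm n F q M Ω c y = expSumTerm n F q M Ω c y' := by
  have hcast : ∀ d, d ∣ Nat.lcm q M → ∀ i, ((y i : ℤ) : ZMod d) = ((y' i : ℤ) : ZMod d) :=
    fun d hd i => by
      simpa only [Int.cast_natCast] using (ZMod.natCast_eq_natCast_iff _ _ _).2 ((h i).of_dvd hd)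
  unfold expSumTerm
  rw [funext (hcast M (Nat.dvd_lcm_right q M)),
    ramanujanSum_congr q (map_eval_congr (Int.castRingHom (ZMod q)) F
      (hcast q (Nat.dvd_lcm_left q M))),
    eFun_congr (Nat.lcm q M) (x := ∑ i, c i * (y i : ℤ)) (y := ∑ i, c i * (y' i : ℤ))
      (by simp only [Int.cast_sum, Int.cast_mul, hcast _ dvd_rfl])]

lemma expSumTerm_mul {q₁ q₂ M₁ M₂ : ℕ} [NeZero q₁] [NeZero q₂] [NeZero M₁] [NeZero M₂]
    (hco : Nat.Coprime (q₁ * M₁) (q₂ * M₂)) {s t : ℤ}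
    (hst : (Nat.lcm q₁ M₁ : ℤ) * s + (Nat.lcm q₂ M₂ : ℤ) * t = 1)
    {Ω : Set (Fin n → ZMod (M₁ * M₂))} [DecidablePred (· ∈ Ω)]
    {Ω₁ : Set (Fin n → ZMod M₁)} [DecidablePred (· ∈ Ω₁)]
    {Ω₂ : Set (Fin n → ZMod M₂)} [DecidablePred (· ∈ Ω₂)]
    (hCRT : ∀ y : Fin n → ℤ,
      (fun i => ((y i : ZMod (M₁ * M₂)))) ∈ Ω ↔
        ((fun i => ((y i : ZMod M₁))) ∈ Ω₁ ∧ (fun i => ((y i : ZMod M₂))) ∈ Ω₂))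
    (c : Fin n → ℤ) (y : Fin n → ℕ) :
    expSumTerm n F (q₁ * q₂) (M₁ * M₂) Ω c y
      = expSumTerm n F q₁ M₁ Ω₁ (fun i => t * c i) y
        * expSumTerm n F q₂ M₂ Ω₂ (fun i => s * c i) y := by
  have hq : q₁.Coprime q₂ :=
    (hco.coprime_dvd_left (Nat.dvd_mul_right q₁ M₁)).coprime_dvd_right (Nat.dvd_mul_right q₂ M₂)
  unfold expSumTerm
  rw [hco.lcm_mul_mul, ramanujanSum_mul hq,
    eFun_mul_split (Nat.lcm_ne_zero (NeZero.ne q₁) (NeZero.ne M₁))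
      (Nat.lcm_ne_zero (NeZero.ne q₂) (NeZero.ne M₂)) hst, ite_zero_mul_ite_zero]
  refine if_congr (hCRT _) ?_ rfl
  simp only [mul_sum, ← mul_assoc]
  ring

end expSumTerm

theorem stmt_5_general (n : ℕ) (F : MvPolynomial (Fin n) ℤ)
    (q₁ q₂ M₁ M₂ : ℕ) (hq₁ : 0 < q₁) (hq₂ : 0 < q₂) (hM₁ : 0 < M₁) (hM₂ : 0 < M₂)
    (hco : Nat.Coprime (q₁ * M₁) (q₂ * M₂))
    (s t : ℤ) (hst : (Nat.lcm q₁ M₁ : ℤ) * s + (Nat.lcm q₂ M₂ : ℤ) * t = 1)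
    (Ω : Set (Fin n → ZMod (M₁ * M₂))) [DecidablePred (· ∈ Ω)]
    (Ω₁ : Set (Fin n → ZMod M₁)) [DecidablePred (· ∈ Ω₁)]
    (Ω₂ : Set (Fin n → ZMod M₂)) [DecidablePred (· ∈ Ω₂)]
    (hCRT : ∀ y : Fin n → ℤ,
      (fun i => ((y i : ZMod (M₁ * M₂)))) ∈ Ω ↔
        ((fun i => ((y i : ZMod M₁))) ∈ Ω₁ ∧ (fun i => ((y i : ZMod M₂))) ∈ Ω₂))
    (c : Fin n → ℤ) :
    expSum n F (q₁ * q₂) (M₁ * M₂) Ω c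
      = expSum n F q₁ M₁ Ω₁ (fun i => t * c i) * expSum n F q₂ M₂ Ω₂ (fun i => s * c i) := by
  have := NeZero.of_pos hq₁
  have := NeZero.of_pos hq₂
  have := NeZero.of_pos hM₁
  have := NeZero.of_pos hM₂
  have : NeZero (Nat.lcm q₁ M₁) := ⟨Nat.lcm_ne_zero hq₁.ne' hM₁.ne'⟩
  have : NeZero (Nat.lcm q₂ M₂) := ⟨Nat.lcm_ne_zero hq₂.ne' hM₂.ne'⟩
  rw [expSum_eq_sum_expSumTerm, expSum_eq_sum_expSumTerm, expSum_eq_sum_expSumTerm,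
    hco.lcm_mul_mul, Finset.sum_congr rfl fun y _ => expSumTerm_mul F hco hst hCRT c y]
  exact sum_piFinset_range_mul_of_coprime hco.coprime_lcm_lcm _ _
    (fun _ _ => expSumTerm_congr F _ _ _ _) (fun _ _ => expSumTerm_congr F _ _ _ _)

/-- Multiplicativity of the exponential sum `S_{q,M}(c)`: if `M = M₁M₂`, `q = q₁q₂`
with `gcd(q₁M₁, q₂M₂) = 1` and `lcm(q₁,M₁)·s + lcm(q₂,M₂)·t = 1`, and `Ω_M`
corresponds to `Ω_{M₁} × Ω_{M₂}` under CRT, then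
`S_{q₁q₂,M}(c) = S_{q₁,M₁}(tc)·S_{q₂,M₂}(sc)`. -/
theorem stmt_5 (n : ℕ) (F : MvPolynomial (Fin n) ℤ) (hF : F.IsHomogeneous 2)
    (q₁ q₂ M₁ M₂ : ℕ) (hq₁ : 0 < q₁) (hq₂ : 0 < q₂) (hM₁ : 0 < M₁) (hM₂ : 0 < M₂)
    (hco : Nat.Coprime (q₁ * M₁) (q₂ * M₂))
    (s t : ℤ) (hst : (Nat.lcm q₁ M₁ : ℤ) * s + (Nat.lcm q₂ M₂ : ℤ) * t = 1)
    (Ω : Set (Fin n → ZMod (M₁ * M₂))) [DecidablePred (· ∈ Ω)]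
    (Ω₁ : Set (Fin n → ZMod M₁)) [DecidablePred (· ∈ Ω₁)]
    (Ω₂ : Set (Fin n → ZMod M₂)) [DecidablePred (· ∈ Ω₂)]
    (hCRT : ∀ y : Fin n → ℤ,
      (fun i => ((y i : ZMod (M₁ * M₂)))) ∈ Ω ↔
        ((fun i => ((y i : ZMod M₁))) ∈ Ω₁ ∧ (fun i => ((y i : ZMod M₂))) ∈ Ω₂))
    (c : Fin n → ℤ) :
    expSum n F (q₁ * q₂) (M₁ * M₂) Ω c
      = expSum n F q₁ M₁ Ω₁ (fun i => t * c i) * expSum n F q₂ M₂ Ω₂ (fun i => s * c i) :=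
  stmt_5_general n F q₁ q₂ M₁ M₂ hq₁ hq₂ hM₁ hM₂ hco s t hst Ω Ω₁ Ω₂ hCRT c
end

section
/- Let c ∈ (0,1) and suppose ω_p ≥ 1 - c/p for all primes p. Then for every ε > 0, G(ξ) := Σ_{k < ξ} μ²(k) Π_{p|k} (ω_p/(1-ω_p)) ≫_ε ξ^{2-ε}. -/
/-!
Since `ω_p ≥ 1 - 1/p`, each factor satisfies `ω_p / (1 - ω_p) ≥ p / 2`, so the term of a
squarefree `k` is at least `k / 2^{ω(k)} ≫_ε k^{1-ε}`. At least a twelfth of the integers below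
`ξ` are squarefree (the others are divisible by `d²` for some `d ≥ 2`, and
`∑_{d ≥ 2} d⁻² ≤ 11/12`), and `m` distinct naturals sum to at least `m(m-1)/2`, so
`G(ξ) ≫_ε ξ^{-ε} ξ²`.
-/

open Finset
open scoped Classical

theorem div_two_le_div_one_sub {x w : ℝ} (hx : 2 ≤ x) (hw : w < 1) (hlow : 1 - 1 / x ≤ w) :
    x / 2 ≤ w / (1 - w) := by
  have hx1 : x * (1 - w) ≤ 1 := by
    have := mul_le_mul_of_nonneg_left (show 1 - w ≤ 1 / x by linarith) (by linarith : 0 ≤ x)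
    rwa [mul_one_div_cancel (by linarith)] at this
  rw [le_div_iff₀ (by linarith)]
  have : 1 / x ≤ 1 / 2 := one_div_le_one_div_of_le two_pos hx
  linarith

theorem le_prod_primeFactors_of_squarefree {f : ℕ → ℝ}
    (hf : ∀ p : ℕ, p.Prime → (p : ℝ) / 2 ≤ f p) {k : ℕ} (hk : Squarefree k) :
    (k : ℝ) / 2 ^ #k.primeFactors ≤ ∏ p ∈ k.primeFactors, f p := by
  calc (k : ℝ) / 2 ^ #k.primeFactors = ∏ p ∈ k.primeFactors, (p : ℝ) / 2 := by
        rw [prod_div_distrib, prod_const, ← Nat.cast_prod, Nat.prod_primeFactors_of_squarefree hk]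
    _ ≤ ∏ p ∈ k.primeFactors, f p :=
        prod_le_prod (fun p _ => by positivity) fun p hp =>
          hf p (Nat.prime_of_mem_primeFactors hp)

theorem two_le_rpow_of_two_rpow_inv_le {ε x : ℝ} (hε : 0 < ε) (hx : 2 ^ ε⁻¹ ≤ x) :
    2 ≤ x ^ ε := by
  calc (2 : ℝ) = (2 ^ ε⁻¹) ^ ε := (Real.rpow_inv_rpow zero_le_two hε.ne').symm
    _ ≤ x ^ ε := by gcongr

theorem two_pow_card_primeFactors_le {ε : ℝ} (hε : 0 < ε) {k : ℕ} (hk : k ≠ 0) :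
    (2 : ℝ) ^ #k.primeFactors ≤ 2 ^ ⌈(2 : ℝ) ^ ε⁻¹⌉₊ * (k : ℝ) ^ ε := by
  set N := ⌈(2 : ℝ) ^ ε⁻¹⌉₊
  -- a prime `p > N` satisfies `2 ≤ p ^ ε`; the at most `N` others are paid for by `2 ^ N`
  have hfactor :
      ∀ p ∈ k.primeFactors, (2 : ℝ) ≤ (if p ≤ N then 2 else 1) * (p : ℝ) ^ ε := by
    intro p hp
    have hp1 : (1 : ℝ) ≤ p := by exact_mod_cast (Nat.prime_of_mem_primeFactors hp).one_le
    split_ifs with hpN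
    · have := Real.one_le_rpow hp1 hε.le
      linarith
    · rw [one_mul]
      have hNp : (N : ℝ) ≤ p := by exact_mod_cast (not_le.1 hpN).le
      exact two_le_rpow_of_two_rpow_inv_le hε ((Nat.le_ceil _).trans hNp)
  have hsmall : #{p ∈ k.primeFactors | p ≤ N} ≤ N := by
    simpa using card_le_card (show {p ∈ k.primeFactors | p ≤ N} ⊆ Icc 1 N from fun p hp => by
      simp only [mem_filter, Nat.mem_primeFactors] at hp
      exact mem_Icc.2 ⟨hp.1.1.one_le, hp.2⟩)
  have hprod : ((∏ p ∈ k.primeFactors, p : ℕ) : ℝ) ≤ k := by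
    exact_mod_cast Nat.le_of_dvd (Nat.pos_of_ne_zero hk) (Nat.prod_primeFactors_dvd k)
  calc (2 : ℝ) ^ #k.primeFactors = ∏ p ∈ k.primeFactors, (2 : ℝ) := (prod_const _).symm
    _ ≤ ∏ p ∈ k.primeFactors, (if p ≤ N then 2 else 1) * (p : ℝ) ^ ε :=
        prod_le_prod (fun _ _ => zero_le_two) hfactor
    _ = 2 ^ #{p ∈ k.primeFactors | p ≤ N} * (∏ p ∈ k.primeFactors, (p : ℝ)) ^ ε := by
        rw [prod_mul_distrib, prod_ite, prod_const, prod_const_one, mul_one,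
          Real.finsetProd_rpow _ _ (fun _ _ => Nat.cast_nonneg _)]
    _ ≤ 2 ^ N * (k : ℝ) ^ ε := by
        push_cast at hprod
        gcongr
        exact one_le_two

theorem div_rpow_le_prod_primeFactors {f : ℕ → ℝ}
    (hf : ∀ p : ℕ, p.Prime → (p : ℝ) / 2 ≤ f p) {ε : ℝ} (hε : 0 < ε)
    {k : ℕ} (hk : Squarefree k) {x : ℝ} (hkx : k ≤ x) :
    (k : ℝ) / (2 ^ ⌈(2 : ℝ) ^ ε⁻¹⌉₊ * x ^ ε) ≤ ∏ p ∈ k.primeFactors, f p := by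
  have hk0 : (0 : ℝ) < k := by exact_mod_cast Nat.pos_of_ne_zero hk.ne_zero
  calc (k : ℝ) / (2 ^ ⌈(2 : ℝ) ^ ε⁻¹⌉₊ * x ^ ε)
      ≤ k / (2 ^ ⌈(2 : ℝ) ^ ε⁻¹⌉₊ * (k : ℝ) ^ ε) := by gcongr
    _ ≤ k / 2 ^ #k.primeFactors := by
        gcongr
        exact two_pow_card_primeFactors_le hε hk.ne_zero
    _ ≤ ∏ p ∈ k.primeFactors, f p := le_prod_primeFactors_of_squarefree hf hk

theorem card_mul_card_sub_one_div_two_le_sum (s : Finset ℕ) :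
    (#s : ℝ) * (#s - 1) / 2 ≤ ∑ k ∈ s, (k : ℝ) := by
  induction s using Finset.induction_on_max with
  | empty => simp
  | insert a s ha ih =>
    have ha' : a ∉ s := fun h => lt_irrefl a (ha a h)
    have hcard : (#s : ℝ) ≤ a := by
      exact_mod_cast (card_le_card fun x hx => mem_range.2 (ha x hx)).trans_eq (card_range a)
    rw [card_insert_of_notMem ha', sum_insert ha']
    push_cast
    linarith

theorem sum_inv_sq_insert_two_Ioo_le (m : ℕ) :
    ∑ d ∈ insert 2 (Ioo 2 m), ((d : ℝ) ^ 2)⁻¹ ≤ 11 / 12 := by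
  rw [sum_insert (by simp)]
  have := sum_Ioo_inv_sq_le (α := ℝ) 2 m
  norm_num at this ⊢
  linarith

theorem card_filter_not_squarefree_Ioc_le (n : ℕ) :
    (#{k ∈ Ioc 0 n | ¬Squarefree k} : ℝ) ≤ 11 / 12 * n := by
  have hsub : {k ∈ Ioc 0 n | ¬Squarefree k} ⊆
      (insert 2 (Ioo 2 (n + 1))).biUnion fun d => {k ∈ Ioc 0 n | d * d ∣ k} := by
    intro k hk
    obtain ⟨hkn, hk⟩ := mem_filter.1 hk
    obtain ⟨p, hp, hpk⟩ : ∃ p, p.Prime ∧ p * p ∣ k := by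
      simpa [Nat.squarefree_iff_prime_squarefree] using hk
    have hpn : p ≤ n :=
      (Nat.le_of_dvd (mem_Ioc.1 hkn).1 (dvd_of_mul_left_dvd hpk)).trans (mem_Ioc.1 hkn).2
    have := hp.two_le
    simp only [mem_biUnion, mem_insert, mem_Ioo, mem_filter]
    exact ⟨p, by omega, hkn, hpk⟩
  calc (#{k ∈ Ioc 0 n | ¬Squarefree k} : ℝ)
      ≤ ∑ d ∈ insert 2 (Ioo 2 (n + 1)), (#{k ∈ Ioc 0 n | d * d ∣ k} : ℝ) := by
        exact_mod_cast (card_le_card hsub).trans card_biUnion_le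
    _ ≤ ∑ d ∈ insert 2 (Ioo 2 (n + 1)), (n : ℝ) * ((d : ℝ) ^ 2)⁻¹ := by
        gcongr with d
        rw [Nat.Ioc_filter_dvd_card_eq_div, ← div_eq_mul_inv, sq]
        exact_mod_cast Nat.cast_div_le
    _ ≤ 11 / 12 * n := by
        rw [← mul_sum, mul_comm]
        gcongr
        exact sum_inv_sq_insert_two_Ioo_le _

theorem card_filter_squarefree_Ioc_ge (n : ℕ) :
    (n : ℝ) / 12 ≤ #{k ∈ Ioc 0 n | Squarefree k} := by
  have hsplit := card_filter_add_card_filter_not (s := Ioc 0 n) (p := Squarefree)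
  rw [Nat.card_Ioc, Nat.sub_zero] at hsplit
  have : (#{k ∈ Ioc 0 n | Squarefree k} : ℝ) + #{k ∈ Ioc 0 n | ¬Squarefree k} = n := by
    exact_mod_cast hsplit
  linarith [card_filter_not_squarefree_Ioc_le n]

theorem stmt_13_general (c : ℝ) (hc1 : c < 1) (ω : ℕ → ℝ)
    (hω : ∀ p : ℕ, p.Prime → 0 ≤ ω p ∧ ω p < 1)
    (hlow : ∀ p : ℕ, p.Prime → 1 - c / p ≤ ω p) (ε : ℝ) (hε : 0 < ε) :
    ∃ C : ℝ, 0 < C ∧ ∃ ξ₀ : ℕ, ∀ ξ : ℕ, ξ₀ ≤ ξ →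
      C * (ξ : ℝ) ^ ((2 : ℝ) - ε)
        ≤ ∑ k ∈ (Finset.Ico 1 ξ).filter Squarefree,
            ∏ p ∈ k.primeFactors, ω p / (1 - ω p) := by
  have hf : ∀ p : ℕ, p.Prime → (p : ℝ) / 2 ≤ ω p / (1 - ω p) := fun p hp => by
    have hp2 : (2 : ℝ) ≤ p := by exact_mod_cast hp.two_le
    refine div_two_le_div_one_sub hp2 (hω p hp).2 ((hlow p hp).trans' ?_)
    gcongr
  set M : ℝ := 2 ^ ⌈(2 : ℝ) ^ ε⁻¹⌉₊
  -- for `n ≥ 24`, `#S ≥ n / 12 ≥ 2` gives `#S (#S - 1) / 2 ≥ #S² / 4 ≥ n² / 576 ≥ (n + 1)² / 1152`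
  refine ⟨1 / (1152 * M), by positivity, 25, fun ξ hξ => ?_⟩
  obtain ⟨n, rfl⟩ : ∃ n, ξ = n + 1 := ⟨ξ - 1, by omega⟩
  have hIco : Ico 1 (n + 1) = Ioc 0 n := by ext; simp; omega
  set S := {k ∈ Ioc 0 n | Squarefree k}
  have hS : (n : ℝ) / 12 ≤ #S := card_filter_squarefree_Ioc_ge n
  have hn : (24 : ℝ) ≤ n := by exact_mod_cast (by omega : 24 ≤ n)
  have hx : (0 : ℝ) < n + 1 := by positivity
  rw [hIco]
  push_cast
  calc 1 / (1152 * M) * ((n : ℝ) + 1) ^ ((2 : ℝ) - ε)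
      = ((n + 1) ^ 2 / 1152) / (M * ((n : ℝ) + 1) ^ ε) := by
        rw [Real.rpow_sub hx, Real.rpow_two]
        field_simp
    _ ≤ (#S : ℝ) * (#S - 1) / 2 / (M * ((n : ℝ) + 1) ^ ε) := by
        gcongr ?_ / _
        nlinarith
    _ ≤ (∑ k ∈ S, (k : ℝ)) / (M * ((n : ℝ) + 1) ^ ε) := by
        gcongr
        exact card_mul_card_sub_one_div_two_le_sum S
    _ = ∑ k ∈ S, (k : ℝ) / (M * ((n : ℝ) + 1) ^ ε) := sum_div _ _ _
    _ ≤ ∑ k ∈ S, ∏ p ∈ k.primeFactors, ω p / (1 - ω p) := by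
        refine sum_le_sum fun k hk => div_rpow_le_prod_primeFactors hf hε (mem_filter.1 hk).2 ?_
        have hkn : (k : ℝ) ≤ n := by exact_mod_cast (mem_Ioc.1 (mem_filter.1 hk).1).2
        linarith

/-- Let `c ∈ (0,1)` and suppose `ω_p ∈ [0,1)` with `ω_p ≥ 1 - c/p` for all primes `p`.
Then for every `ε > 0`,
`G(ξ) := Σ_{k < ξ} μ²(k) Π_{p|k} (ω_p/(1-ω_p)) ≫_ε ξ^{2-ε}`. -/
theorem stmt_13 (c : ℝ) (hc0 : 0 < c) (hc1 : c < 1) (ω : ℕ → ℝ)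
    (hω : ∀ p : ℕ, p.Prime → 0 ≤ ω p ∧ ω p < 1)
    (hlow : ∀ p : ℕ, p.Prime → 1 - c / p ≤ ω p) (ε : ℝ) (hε : 0 < ε) :
    ∃ C : ℝ, 0 < C ∧ ∃ ξ₀ : ℕ, ∀ ξ : ℕ, ξ₀ ≤ ξ →
      C * (ξ : ℝ) ^ ((2 : ℝ) - ε)
        ≤ ∑ k ∈ (Finset.Ico 1 ξ).filter Squarefree,
            ∏ p ∈ k.primeFactors, ω p / (1 - ω p) :=
  stmt_13_general c hc1 ω hω hlow ε hε
end

section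
/- Let a_n be a finite sequence of non-negative reals indexed by positive integers, P a squarefree positive integer, and suppose for every d | P: Σ_{d|n} a_n = g(d)·X + r_d, where g is multiplicative on divisors of P with 0 < g(p) < 1 for p | P, and |r_d| ≤ C·d^κ for constants C, κ > 0. Then (Selberg sieve) Σ_{gcd(n,P)=1} a_n ≤ X/G(ξ) + Σ_{d ≤ ξ²} τ₃(d)·C·d^κ, where G(ξ) = Σ_{k ≤ ξ, k|P} μ²(k) Π_{p|k} g(p)/(1-g(p)) and τ₃ is the 3-fold divisor function. -/
/-!
Selberg's Λ² method. For real weights `λ` on the squarefree divisors `d ≤ ξ` of `P` with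
`λ₁ = 1`, the indicator of `(n, P) = 1` is at most `(∑_{d ∣ n} λ_d)²`. Summing against `a_n`
and inserting `∑_{d ∣ n} a_n = g(d) X + r_d` gives
`X · ∑ λ_d λ_e g([d, e]) + ∑ λ_d λ_e r_{[d, e]}`.
Since `1 / g((d, e)) = ∑_{k ∣ (d, e)} ∏_{p ∣ k} (1 - g p) / g p`, the quadratic form is
diagonal in the variables `y_k = ∑_{k ∣ d} g(d) λ_d`; Selberg's choice of `λ` makes it equal
to `1 / G(ξ)` while keeping `|λ_d| ≤ 1`. Finally each pair `(d, e)` is determined by the chain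
`(d, e) ∣ d ∣ [d, e]`, and `[d, e] ≤ ξ²`, so the remainder is at most
`∑_{m ≤ ξ²} τ₃(m) C m^κ`.

Squarefree divisors of `P` are encoded by their sets of prime factors, so that `lcm` and `gcd`
become `∪` and `∩`.
-/

open Finset

namespace SelbergSieve

section FinsetAlgebra

variable {α : Type*}

theorem sum_comp_le_sum_of_injOn {ι κ M : Type*} [AddCommMonoid M] [PartialOrder M]
    [IsOrderedAddMonoid M] [DecidableEq κ] {s : Finset ι} {t : Finset κ} {e : ι → κ}
    (he : Set.InjOn e s) (hst : Set.MapsTo e s t) {f : κ → M} (hf : ∀ k ∈ t, 0 ≤ f k) :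
    ∑ i ∈ s, f (e i) ≤ ∑ k ∈ t, f k := by
  rw [← sum_image he]
  exact sum_le_sum_of_subset_of_nonneg (image_subset_iff.2 hst) fun k hk _ => hf k hk

theorem prod_inv_eq_sum_powerset {K : Type*} [Field K] {u : α → K} {s : Finset α}
    (hu : ∀ p ∈ s, u p ≠ 0) :
    ∏ p ∈ s, (u p)⁻¹ = ∑ e ∈ s.powerset, ∏ p ∈ e, (1 - u p) / u p := by
  rw [← prod_one_add]
  refine prod_congr rfl fun p hp => ?_
  field_simp [hu p hp]
  ring

theorem prod_union_eq_mul_sum_powerset_inter [DecidableEq α] {K : Type*} [Field K]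
    {u : α → K} {s t : Finset α} (hu : ∀ p ∈ s ∩ t, u p ≠ 0) :
    ∏ p ∈ s ∪ t, u p = (∏ p ∈ s, u p) * (∏ p ∈ t, u p) *
      ∑ k ∈ (s ∩ t).powerset, ∏ p ∈ k, (1 - u p) / u p := by
  rw [← prod_inv_eq_sum_powerset hu, prod_inv_distrib, ← prod_union_inter,
    mul_inv_cancel_right₀ (prod_ne_zero_iff.2 hu)]

theorem sum_Icc_neg_one_pow_card [DecidableEq α] {R : Type*} [Ring R] {k t : Finset α}
    (hkt : k ⊆ t) :
    ∑ d ∈ Icc k t, (-1 : R) ^ #d = if t = k then (-1) ^ #k else 0 := by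
  have hdisj : ∀ m ∈ (t \ k).powerset, Disjoint k m := fun m hm =>
    disjoint_of_subset_right (mem_powerset.1 hm) disjoint_sdiff
  have hinj : Set.InjOn (k ∪ ·) (t \ k).powerset := fun m hm m' hm' h => by
    rw [← union_sdiff_cancel_left (hdisj m hm), ← union_sdiff_cancel_left (hdisj m' hm')]
    exact congrArg (· \ k) h
  have hpow : ∑ m ∈ (t \ k).powerset, (-1 : R) ^ #m = if t \ k = ∅ then 1 else 0 := by
    exact_mod_cast congrArg (Int.cast : ℤ → R) sum_powerset_neg_one_pow_card
  rw [Icc_eq_image_powerset hkt, sum_image hinj,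
    sum_congr rfl fun m hm => by rw [card_union_of_disjoint (hdisj m hm), pow_add],
    ← mul_sum, hpow]
  rcases eq_or_ne t k with rfl | htk
  · simp
  · have : ¬ t ⊆ k := fun h => htk (h.antisymm hkt)
    simp [htk, sdiff_eq_empty_iff_subset, this]

end FinsetAlgebra

section Weights

variable {α : Type*} (g : α → ℝ) (D : Finset (Finset α))

noncomputable def selbergDensity (s : Finset α) : ℝ := ∏ p ∈ s, g p / (1 - g p)

noncomputable def selbergSum : ℝ := ∑ s ∈ D, selbergDensity g s

variable {g D}

theorem selbergDensity_pos {s : Finset α} (hg : ∀ p ∈ s, 0 < g p ∧ g p < 1) :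
    0 < selbergDensity g s :=
  prod_pos fun p hp => div_pos (hg p hp).1 (sub_pos.2 (hg p hp).2)

theorem selbergSum_pos (hg : ∀ s ∈ D, ∀ p ∈ s, 0 < g p ∧ g p < 1) (h0 : ∅ ∈ D) :
    0 < selbergSum g D :=
  sum_pos' (fun s hs => (selbergDensity_pos (hg s hs)).le) ⟨∅, h0, by simp [selbergDensity]⟩

variable [DecidableEq α]

theorem selbergDensity_union {s t : Finset α} (hst : Disjoint s t) :
    selbergDensity g (s ∪ t) = selbergDensity g s * selbergDensity g t :=
  prod_union hst

variable (g D)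

/-- Selberg's weights, which minimise `selbergQuadraticForm g D` subject to `λ ∅ = 1`. -/
noncomputable def selbergLambda (s : Finset α) : ℝ :=
  (-1) ^ #s * (∏ p ∈ s, (1 - g p)⁻¹) * (∑ t ∈ D with s ⊆ t, selbergDensity g (t \ s)) /
    selbergSum g D

variable {g D}

theorem selbergLambda_empty (hg : ∀ s ∈ D, ∀ p ∈ s, 0 < g p ∧ g p < 1) (h0 : ∅ ∈ D) :
    selbergLambda g D ∅ = 1 := by
  rw [selbergLambda, filter_true_of_mem fun t _ => empty_subset t]
  simp only [card_empty, pow_zero, prod_empty, one_mul, sdiff_empty]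
  exact div_self (selbergSum_pos hg h0).ne'

theorem selbergLambda_eq_zero (hD : IsLowerSet (D : Set (Finset α))) {s : Finset α}
    (hs : s ∉ D) : selbergLambda g D s = 0 := by
  have : {t ∈ D | s ⊆ t} = ∅ := filter_eq_empty_iff.2 fun t ht hst => hs (hD hst ht)
  simp [selbergLambda, this]

/-- Expanding `∏ (1 - g p)⁻¹ = ∑_{e ⊆ s} selbergDensity g e`, the left side sums
`selbergDensity g (e ∪ (t \ s))` over pairs `(e, t)`, and `(e, t) ↦ e ∪ (t \ s)` is injective
into `D`. -/
theorem prod_inv_one_sub_mul_sum_le_selbergSum (hg : ∀ s ∈ D, ∀ p ∈ s, 0 < g p ∧ g p < 1)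
    (hD : IsLowerSet (D : Set (Finset α))) {s : Finset α} (hs : s ∈ D) :
    (∏ p ∈ s, (1 - g p)⁻¹) * ∑ t ∈ D with s ⊆ t, selbergDensity g (t \ s)
      ≤ selbergSum g D := by
  have hsplit : ∏ p ∈ s, (1 - g p)⁻¹ = ∑ e ∈ s.powerset, selbergDensity g e := by
    rw [prod_inv_eq_sum_powerset fun p hp => (sub_pos.2 (hg s hs p hp).2).ne']
    simp [selbergDensity]
  have hrecover : ∀ x ∈ s.powerset ×ˢ {t ∈ D | s ⊆ t},
      (x.1 ∪ x.2 \ s) ∩ s = x.1 ∧ s ∪ (x.1 ∪ x.2 \ s) = x.2 := by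
    rintro ⟨e, t⟩ hx
    simp only [mem_product, mem_powerset, mem_filter] at hx
    obtain ⟨hes, -, hst⟩ := hx
    constructor <;> ext p <;> simp only [mem_union, mem_inter, mem_sdiff] <;>
      have := @hes p <;> have := @hst p <;> tauto
  rw [hsplit, sum_mul_sum, ← sum_product', sum_congr rfl fun x hx => (selbergDensity_union
    (disjoint_sdiff.mono_left (mem_powerset.1 (mem_product.1 hx).1))).symm]
  refine sum_comp_le_sum_of_injOn (f := selbergDensity g) ?_ ?_
    fun t ht => (selbergDensity_pos (hg t ht)).le
  · intro x hx y hy hxy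
    have hx' := hrecover x hx
    rw [show x.1 ∪ x.2 \ s = y.1 ∪ y.2 \ s from hxy, hrecover y hy |>.1,
      hrecover y hy |>.2] at hx'
    exact Prod.ext hx'.1.symm hx'.2.symm
  · intro x hx
    exact mem_coe.2 <| hD (subset_union_right.trans (hrecover x hx).2.subset)
      (mem_filter.1 (mem_product.1 hx).2).1

theorem abs_selbergLambda_le_one (hg : ∀ s ∈ D, ∀ p ∈ s, 0 < g p ∧ g p < 1)
    (hD : IsLowerSet (D : Set (Finset α))) (h0 : ∅ ∈ D) (s : Finset α) :
    |selbergLambda g D s| ≤ 1 := by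
  by_cases hs : s ∈ D
  · have hprod : 0 ≤ ∏ p ∈ s, (1 - g p)⁻¹ :=
      prod_nonneg fun p hp => inv_nonneg.2 (sub_nonneg.2 (hg s hs p hp).2.le)
    have hsum : 0 ≤ ∑ t ∈ D with s ⊆ t, selbergDensity g (t \ s) :=
      sum_nonneg fun t ht => (selbergDensity_pos fun p hp =>
        hg t (mem_filter.1 ht).1 p (mem_sdiff.1 hp).1).le
    have hG := selbergSum_pos hg h0
    rw [selbergLambda, abs_div, abs_mul, abs_mul, abs_pow, abs_neg, abs_one, one_pow, one_mul,
      abs_of_nonneg hprod, abs_of_nonneg hsum, abs_of_pos hG, div_le_one hG]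
    exact prod_inv_one_sub_mul_sum_le_selbergSum hg hD hs
  · simp [selbergLambda_eq_zero hD hs]

theorem prod_mul_selbergLambda (d : Finset α) :
    (∏ p ∈ d, g p) * selbergLambda g D d
      = (-1) ^ #d * (∑ t ∈ D with d ⊆ t, selbergDensity g t) / selbergSum g D := by
  have hd : (∏ p ∈ d, g p) * ∏ p ∈ d, (1 - g p)⁻¹ = selbergDensity g d := by
    rw [← prod_mul_distrib]; rfl
  have ht : ∀ t ∈ {t ∈ D | d ⊆ t},
      selbergDensity g t = selbergDensity g d * selbergDensity g (t \ d) :=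
    fun t ht => by
      rw [← selbergDensity_union disjoint_sdiff, union_sdiff_of_subset (mem_filter.1 ht).2]
  rw [sum_congr rfl ht, ← mul_sum, ← hd, selbergLambda]
  ring

/-- `d ↦ g(d) λ_d` is the Möbius inversion of `k ↦ (-1) ^ #k * selbergDensity g k / selbergSum g D`
over the lattice `D`. -/
theorem sum_prod_mul_selbergLambda (hD : IsLowerSet (D : Set (Finset α))) (k : Finset α) :
    ∑ d ∈ D with k ⊆ d, (∏ p ∈ d, g p) * selbergLambda g D d
      = if k ∈ D then (-1) ^ #k * selbergDensity g k / selbergSum g D else 0 := by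
  simp_rw [prod_mul_selbergLambda, ← sum_div]
  rw [← zero_div (selbergSum g D), ← ite_div]
  congr 1
  calc ∑ d ∈ D with k ⊆ d, (-1) ^ #d * ∑ t ∈ D with d ⊆ t, selbergDensity g t
      = ∑ t ∈ D with k ⊆ t, ∑ d ∈ Icc k t, (-1) ^ #d * selbergDensity g t := by
        simp_rw [mul_sum]
        refine sum_comm' fun d t => ?_
        simp only [mem_filter, mem_Icc]
        exact ⟨fun ⟨⟨_, hkd⟩, ht, hdt⟩ => ⟨⟨hkd, hdt⟩, ht, hkd.trans hdt⟩,
          fun ⟨⟨hkd, hdt⟩, ht, _⟩ => ⟨⟨hD hdt ht, hkd⟩, ht, hdt⟩⟩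
    _ = ∑ t ∈ D with k ⊆ t, if k = t then (-1) ^ #k * selbergDensity g t else 0 := by
        refine sum_congr rfl fun t ht => ?_
        rw [← sum_mul, sum_Icc_neg_one_pow_card (mem_filter.1 ht).2]
        rcases eq_or_ne k t with rfl | hkt
        · simp
        · simp [hkt.symm, hkt]
    _ = if k ∈ D then (-1) ^ #k * selbergDensity g k else 0 := by
        simp [sum_ite_eq]

variable (g D) in
noncomputable def selbergQuadraticForm (w : Finset α → ℝ) : ℝ :=
  ∑ s ∈ D, ∑ t ∈ D, w s * w t * ∏ p ∈ s ∪ t, g p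

theorem selbergQuadraticForm_selbergLambda (hg : ∀ s ∈ D, ∀ p ∈ s, 0 < g p ∧ g p < 1)
    (hD : IsLowerSet (D : Set (Finset α))) :
    selbergQuadraticForm g D (selbergLambda g D) = (selbergSum g D)⁻¹ := by
  set w : Finset α → ℝ := fun k => ∏ p ∈ k, (1 - g p) / g p
  set y : Finset α → Finset α → ℝ := fun k s =>
    if k ⊆ s then (∏ p ∈ s, g p) * selbergLambda g D s else 0
  have hexpand : ∀ s ∈ D, ∀ t ∈ D,
      selbergLambda g D s * selbergLambda g D t * ∏ p ∈ s ∪ t, g p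
        = ∑ k ∈ D, w k * (y k s * y k t) := by
    intro s hs t ht
    have hpow : (s ∩ t).powerset = {k ∈ D | k ⊆ s ∩ t} := by
      ext k
      simp only [mem_powerset, mem_filter, iff_and_self]
      exact fun hk => hD (hk.trans inter_subset_left) hs
    rw [prod_union_eq_mul_sum_powerset_inter fun p hp => (hg s hs p (mem_inter.1 hp).1).1.ne',
      hpow, sum_filter, mul_sum, mul_sum]
    refine sum_congr rfl fun k _ => ?_
    simp only [w, y, subset_inter_iff]
    by_cases hks : k ⊆ s <;> by_cases hkt : k ⊆ t <;>
      simp only [hks, hkt, and_self, and_false, false_and, if_true, if_false] <;> ring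
  have hy : ∀ k ∈ D,
      w k * (∑ s ∈ D, y k s) ^ 2 = selbergDensity g k / selbergSum g D ^ 2 := by
    intro k hk
    have hwk : w k * selbergDensity g k = 1 := by
      rw [selbergDensity, ← prod_mul_distrib]
      refine prod_eq_one fun p hp => ?_
      have := hg k hk p hp
      field_simp [this.1.ne', (sub_pos.2 this.2).ne']
    simp only [y]
    rw [← sum_filter, sum_prod_mul_selbergLambda hD, if_pos hk, div_pow, mul_pow,
      ← pow_mul, pow_mul', neg_one_sq, one_pow, one_mul, sq (selbergDensity g k),
      mul_div_assoc', ← mul_assoc, hwk, one_mul]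
  calc selbergQuadraticForm g D (selbergLambda g D)
      = ∑ k ∈ D, w k * (∑ s ∈ D, y k s) ^ 2 := by
        rw [selbergQuadraticForm, sum_congr rfl fun s hs => sum_congr rfl (hexpand s hs)]
        simp_rw [sq, sum_mul_sum, mul_sum]
        exact (sum_congr rfl fun s _ => sum_comm).trans sum_comm
    _ = selbergSum g D / selbergSum g D ^ 2 := by
        rw [sum_congr rfl hy, ← sum_div, selbergSum]
    _ = (selbergSum g D)⁻¹ := by rw [sq, div_self_mul_self']

end Weights

section Primes

theorem prod_dvd_iff_of_forall_prime {s : Finset ℕ} (hs : ∀ p ∈ s, p.Prime) {n : ℕ} :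
    ∏ p ∈ s, p ∣ n ↔ ∀ p ∈ s, p ∣ n :=
  ⟨fun h _ hp => (dvd_prod_of_mem _ hp).trans h,
    prod_primes_dvd n fun p hp => (hs p hp).prime⟩

theorem prod_union_dvd_iff_of_forall_prime {s t : Finset ℕ} (hs : ∀ p ∈ s, p.Prime)
    (ht : ∀ p ∈ t, p.Prime) {n : ℕ} :
    ∏ p ∈ s ∪ t, p ∣ n ↔ ∏ p ∈ s, p ∣ n ∧ ∏ p ∈ t, p ∣ n := by
  rw [prod_dvd_iff_of_forall_prime fun p hp => (mem_union.1 hp).elim (hs p) (ht p),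
    prod_dvd_iff_of_forall_prime hs, prod_dvd_iff_of_forall_prime ht, forall_mem_union]

theorem prod_dvd_of_subset_primeFactors {P : ℕ} {s : Finset ℕ} (hs : s ⊆ P.primeFactors) :
    ∏ p ∈ s, p ∣ P :=
  (prod_dvd_iff_of_forall_prime fun _ hp => Nat.prime_of_mem_primeFactors (hs hp)).2
    fun _ hp => Nat.dvd_of_mem_primeFactors (hs hp)

theorem map_prod_of_subset_primeFactors {M : Type*} [CommMonoid M] {P : ℕ} {g : ℕ → M}
    (hg1 : g 1 = 1)
    (hgmul : ∀ d e : ℕ, d ∣ P → e ∣ P → Nat.Coprime d e → g (d * e) = g d * g e)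
    {s : Finset ℕ} (hs : s ⊆ P.primeFactors) :
    g (∏ p ∈ s, p) = ∏ p ∈ s, g p := by
  induction s using Finset.induction_on with
  | empty => simpa using hg1
  | insert p s hps ih =>
    have hsP := (subset_insert p s).trans hs
    have hp := Nat.prime_of_mem_primeFactors (hs (mem_insert_self p s))
    have hcop : Nat.Coprime p (∏ q ∈ s, q) := Nat.Coprime.prod_right fun q hq =>
      (Nat.coprime_primes hp (Nat.prime_of_mem_primeFactors (hsP hq))).2
        (ne_of_mem_of_not_mem hq hps).symm
    rw [prod_insert hps, prod_insert hps, hgmul p _ (Nat.dvd_of_mem_primeFactors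
      (hs (mem_insert_self p s))) (prod_dvd_of_subset_primeFactors hsP) hcop, ih hsP]

theorem eq_of_prod_eq_prod_of_forall_prime {s t : Finset ℕ} (hs : ∀ p ∈ s, p.Prime)
    (ht : ∀ p ∈ t, p.Prime) (h : ∏ p ∈ s, p = ∏ p ∈ t, p) : s = t := by
  rw [← Nat.primeFactors_prod hs, h, Nat.primeFactors_prod ht]

noncomputable def sieveSets (P : ℕ) (ξ : ℝ) : Finset (Finset ℕ) :=
  {s ∈ P.primeFactors.powerset | ((∏ p ∈ s, p : ℕ) : ℝ) ≤ ξ}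

variable {P : ℕ} {ξ : ℝ}

theorem mem_sieveSets {s : Finset ℕ} :
    s ∈ sieveSets P ξ ↔ s ⊆ P.primeFactors ∧ ((∏ p ∈ s, p : ℕ) : ℝ) ≤ ξ := by
  rw [sieveSets, mem_filter, mem_powerset]

theorem isLowerSet_sieveSets : IsLowerSet (sieveSets P ξ : Set (Finset ℕ)) := by
  intro s t hts hs
  rw [mem_coe, mem_sieveSets] at *
  refine ⟨hts.trans hs.1, le_trans ?_ hs.2⟩
  exact_mod_cast Nat.le_of_dvd
    (prod_pos fun p hp => (Nat.prime_of_mem_primeFactors (hs.1 hp)).pos)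
    (prod_dvd_prod_of_subset _ _ _ hts)

theorem empty_mem_sieveSets (hξ : 1 ≤ ξ) : ∅ ∈ sieveSets P ξ := by
  simpa [mem_sieveSets] using hξ

theorem sum_divisors_le_eq_sum_sieveSets {M : Type*} [AddCommMonoid M] (hP : Squarefree P)
    (F : ℕ → M) :
    ∑ k ∈ P.divisors.filter (fun k : ℕ => (k : ℝ) ≤ ξ), F k
      = ∑ s ∈ sieveSets P ξ, F (∏ p ∈ s, p) := by
  have hsq : ∀ k ∈ P.divisors, Squarefree k := fun k hk =>
    hP.squarefree_of_dvd (Nat.dvd_of_mem_divisors hk)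
  refine sum_nbij' Nat.primeFactors (fun s => ∏ p ∈ s, p) ?_ ?_ ?_ ?_ ?_
  · intro k hk
    rw [mem_filter] at hk
    rw [mem_sieveSets, Nat.prod_primeFactors_of_squarefree (hsq k hk.1)]
    exact ⟨Nat.primeFactors_mono (Nat.dvd_of_mem_divisors hk.1) hP.ne_zero, hk.2⟩
  · intro s hs
    rw [mem_sieveSets] at hs
    rw [mem_filter, Nat.mem_divisors]
    exact ⟨⟨prod_dvd_of_subset_primeFactors hs.1, hP.ne_zero⟩, hs.2⟩
  · intro k hk
    exact Nat.prod_primeFactors_of_squarefree (hsq k (mem_filter.1 hk).1)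
  · intro s hs
    exact Nat.primeFactors_prod fun p hp =>
      Nat.prime_of_mem_primeFactors ((mem_sieveSets.1 hs).1 hp)
  · intro k hk
    rw [Nat.prod_primeFactors_of_squarefree (hsq k (mem_filter.1 hk).1)]

end Primes

section LambdaSquared

variable {D : Finset (Finset ℕ)}

theorem sum_ite_prod_dvd_of_coprime {P n : ℕ} (hD : ∀ s ∈ D, s ⊆ P.primeFactors) (h0 : ∅ ∈ D)
    (hn : n.Coprime P) (w : Finset ℕ → ℝ) :
    ∑ s ∈ D, (if ∏ p ∈ s, p ∣ n then w s else 0) = w ∅ := by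
  rw [sum_eq_single_of_mem ∅ h0 fun s hs hne => if_neg fun hdvd => ?_, if_pos (by simp)]
  obtain ⟨p, hp⟩ := nonempty_iff_ne_empty.2 hne
  have hpP := hD s hs hp
  exact (Nat.prime_of_mem_primeFactors hpP).one_lt.ne' <| Nat.eq_one_of_dvd_coprimes hn
    ((dvd_prod_of_mem _ hp).trans hdvd) (Nat.dvd_of_mem_primeFactors hpP)

theorem sum_mul_sq_sum_ite_prod_dvd (hD : ∀ s ∈ D, ∀ p ∈ s, p.Prime) (S : Finset ℕ)
    (a : ℕ → ℝ) (w : Finset ℕ → ℝ) :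
    ∑ n ∈ S, a n * (∑ s ∈ D, if ∏ p ∈ s, p ∣ n then w s else 0) ^ 2
      = ∑ s ∈ D, ∑ t ∈ D, w s * w t * ∑ n ∈ S, if ∏ p ∈ s ∪ t, p ∣ n then a n else 0 := by
  simp_rw [sq, sum_mul_sum, mul_sum]
  refine sum_comm.trans (sum_congr rfl fun s hs => sum_comm.trans
    (sum_congr rfl fun t ht => sum_congr rfl fun n _ => ?_))
  simp only [prod_union_dvd_iff_of_forall_prime (hD s hs) (hD t ht)]
  by_cases hs : ∏ p ∈ s, p ∣ n <;> by_cases ht : ∏ p ∈ t, p ∣ n <;>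
    simp only [hs, ht, and_self, and_false, false_and, if_true, if_false] <;> ring

theorem sum_coprime_le_selbergQuadraticForm_add {P : ℕ} (hD : ∀ s ∈ D, s ⊆ P.primeFactors)
    (h0 : ∅ ∈ D) {w : Finset ℕ → ℝ} (hw : w ∅ = 1) (S : Finset ℕ) {a : ℕ → ℝ}
    (ha : ∀ n, 0 ≤ a n) {g : ℕ → ℝ} (hg1 : g 1 = 1)
    (hgmul : ∀ d e : ℕ, d ∣ P → e ∣ P → Nat.Coprime d e → g (d * e) = g d * g e)
    (X : ℝ) (r : ℕ → ℝ)
    (hr : ∀ d : ℕ, d ∣ P → (∑ n ∈ S, if d ∣ n then a n else 0) = g d * X + r d) :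
    ∑ n ∈ S, (if n.Coprime P then a n else 0)
      ≤ X * selbergQuadraticForm g D w
        + ∑ s ∈ D, ∑ t ∈ D, w s * w t * r (∏ p ∈ s ∪ t, p) := by
  have hprime : ∀ s ∈ D, ∀ p ∈ s, p.Prime := fun s hs p hp =>
    Nat.prime_of_mem_primeFactors (hD s hs hp)
  calc _ ≤ ∑ n ∈ S, a n * (∑ s ∈ D, if ∏ p ∈ s, p ∣ n then w s else 0) ^ 2 := by
        refine sum_le_sum fun n _ => ?_
        split_ifs with hn
        · rw [sum_ite_prod_dvd_of_coprime hD h0 hn, hw, one_pow, mul_one]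
        · exact mul_nonneg (ha n) (sq_nonneg _)
    _ = _ := by
        rw [sum_mul_sq_sum_ite_prod_dvd hprime, selbergQuadraticForm, mul_sum,
          ← sum_add_distrib]
        refine sum_congr rfl fun s hs => ?_
        rw [mul_sum, ← sum_add_distrib]
        refine sum_congr rfl fun t ht => ?_
        have hst : s ∪ t ⊆ P.primeFactors := union_subset (hD s hs) (hD t ht)
        rw [hr _ (prod_dvd_of_subset_primeFactors hst),
          map_prod_of_subset_primeFactors hg1 hgmul hst]
        ring

theorem sum_sum_mul_mul_le_of_abs_le_one {ι : Type*} (D : Finset ι) {w : ι → ℝ}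
    (hw : ∀ s, |w s| ≤ 1) {R F : ι → ι → ℝ} (hR : ∀ s ∈ D, ∀ t ∈ D, |R s t| ≤ F s t) :
    ∑ s ∈ D, ∑ t ∈ D, w s * w t * R s t ≤ ∑ s ∈ D, ∑ t ∈ D, F s t :=
  sum_le_sum fun s hs => sum_le_sum fun t ht => calc
    w s * w t * R s t ≤ |w s| * |w t| * |R s t| := by
      rw [← abs_mul, ← abs_mul]; exact le_abs_self _
    _ ≤ 1 * 1 * F s t := by gcongr <;> first | exact hw _ | exact hR s hs t ht
    _ = F s t := by ring

theorem sum_sum_prod_union_le_sum_tau3 (hD : ∀ s ∈ D, ∀ p ∈ s, p.Prime) {ξ : ℝ}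
    (hξ : ∀ s ∈ D, ((∏ p ∈ s, p : ℕ) : ℝ) ≤ ξ) {F : ℕ → ℝ} (hF : ∀ d, 0 ≤ F d) :
    ∑ s ∈ D, ∑ t ∈ D, F (∏ p ∈ s ∪ t, p)
      ≤ ∑ d ∈ Icc 1 ⌊ξ ^ 2⌋₊, (∑ e ∈ d.divisors, (#e.divisors : ℝ)) * F d := by
  have hsum : ∑ d ∈ Icc 1 ⌊ξ ^ 2⌋₊, (∑ e ∈ d.divisors, (#e.divisors : ℝ)) * F d
      = ∑ x ∈ (Icc 1 ⌊ξ ^ 2⌋₊).sigma fun d => d.divisors.sigma fun e => e.divisors,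
          F x.1 := by
    simp_rw [sum_sigma, sum_mul, sum_const, nsmul_eq_mul]
  have hprime : ∀ x ∈ D ×ˢ D, (∀ p ∈ x.1, p.Prime) ∧ (∀ p ∈ x.2, p.Prime) := fun x hx =>
    ⟨hD _ (mem_product.1 hx).1, hD _ (mem_product.1 hx).2⟩
  rw [hsum, ← sum_product']
  refine sum_comp_le_sum_of_injOn (f := fun y => F y.1)
    (e := fun x : Finset ℕ × Finset ℕ =>
      (⟨∏ p ∈ x.1 ∪ x.2, p, ∏ p ∈ x.1, p, ∏ p ∈ x.1 ∩ x.2, p⟩ : Σ _ : ℕ, Σ _ : ℕ, ℕ))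
    ?_ ?_ fun _ _ => hF _
  · intro x hx y hy hxy
    simp only [Sigma.mk.inj_iff, heq_iff_eq] at hxy
    obtain ⟨hx1, hx2⟩ := hprime x hx
    obtain ⟨hy1, hy2⟩ := hprime y hy
    have hs := eq_of_prod_eq_prod_of_forall_prime hx1 hy1 hxy.2.1
    have hu := eq_of_prod_eq_prod_of_forall_prime (forall_mem_union.2 ⟨hx1, hx2⟩)
      (forall_mem_union.2 ⟨hy1, hy2⟩) hxy.1
    have hi := eq_of_prod_eq_prod_of_forall_prime (fun p hp => hx1 p (mem_inter.1 hp).1)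
      (fun p hp => hy1 p (mem_inter.1 hp).1) hxy.2.2
    have hrecover : ∀ s t : Finset ℕ, s ∩ t ∪ (s ∪ t) \ s = t := fun s t => by
      ext p; simp only [mem_union, mem_inter, mem_sdiff]; tauto
    exact Prod.ext hs (by rw [← hrecover x.1 x.2, hu, hi, hs, hrecover])
  · intro x hx
    obtain ⟨hs, ht⟩ := hprime x hx
    have hpos : ∀ s : Finset ℕ, (∀ p ∈ s, p.Prime) → 0 < ∏ p ∈ s, p := fun s hs =>
      prod_pos fun p hp => (hs p hp).pos
    have hu := hpos _ (forall_mem_union.2 ⟨hs, ht⟩)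
    have hle : ∏ p ∈ x.1 ∪ x.2, p ≤ (∏ p ∈ x.1, p) * ∏ p ∈ x.2, p := by
      rw [← prod_union_inter]
      exact Nat.le_mul_of_pos_right _ (hpos _ fun p hp => hs p (mem_inter.1 hp).1)
    have hξs := hξ _ (mem_product.1 hx).1
    simp only [mem_coe, mem_sigma, mem_Icc, Nat.mem_divisors]
    refine ⟨⟨hu, Nat.le_floor ?_⟩, ⟨prod_dvd_prod_of_subset _ _ _ subset_union_left, hu.ne'⟩,
      prod_dvd_prod_of_subset _ _ _ inter_subset_left, (hpos _ hs).ne'⟩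
    calc ((∏ p ∈ x.1 ∪ x.2, p : ℕ) : ℝ)
        ≤ ((∏ p ∈ x.1, p : ℕ) : ℝ) * ((∏ p ∈ x.2, p : ℕ) : ℝ) := by exact_mod_cast hle
      _ ≤ ξ ^ 2 := by
          rw [sq]
          exact mul_le_mul hξs (hξ _ (mem_product.1 hx).2) (Nat.cast_nonneg _)
            ((Nat.cast_nonneg _).trans hξs)

end LambdaSquared

end SelbergSieve

open SelbergSieve

theorem stmt_18_general (N : ℕ) (a : ℕ → ℝ) (ha : ∀ n, 0 ≤ a n)
    (P : ℕ) (hPsq : Squarefree P)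
    (g : ℕ → ℝ) (hg1 : g 1 = 1)
    (hgmul : ∀ d e : ℕ, d ∣ P → e ∣ P → Nat.Coprime d e → g (d * e) = g d * g e)
    (hgp : ∀ q : ℕ, q.Prime → q ∣ P → 0 < g q ∧ g q < 1)
    (X C κ : ℝ)
    (r : ℕ → ℝ)
    (hr : ∀ d : ℕ, d ∣ P →
      (∑ n ∈ Finset.Icc 1 N, if d ∣ n then a n else 0) = g d * X + r d)
    (hrbound : ∀ d : ℕ, d ∣ P → |r d| ≤ C * (d : ℝ) ^ κ)
    (ξ : ℝ) (hξ : 1 ≤ ξ) :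
    (∑ n ∈ Finset.Icc 1 N, if Nat.Coprime n P then a n else 0)
      ≤ X / (∑ k ∈ P.divisors.filter (fun k : ℕ => (k : ℝ) ≤ ξ),
              ∏ q ∈ k.primeFactors, g q / (1 - g q))
        + ∑ d ∈ Finset.Icc 1 ⌊ξ ^ 2⌋₊,
            (∑ e ∈ d.divisors, (e.divisors.card : ℝ)) * C * (d : ℝ) ^ κ := by
  set D := sieveSets P ξ
  have hDP : ∀ s ∈ D, s ⊆ P.primeFactors := fun s hs => (mem_sieveSets.1 hs).1
  have hDprime : ∀ s ∈ D, ∀ p ∈ s, p.Prime := fun s hs p hp =>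
    Nat.prime_of_mem_primeFactors (hDP s hs hp)
  have hgD : ∀ s ∈ D, ∀ p ∈ s, 0 < g p ∧ g p < 1 := fun s hs p hp =>
    hgp p (hDprime s hs p hp) (Nat.dvd_of_mem_primeFactors (hDP s hs hp))
  have h0 : ∅ ∈ D := empty_mem_sieveSets hξ
  have hC : 0 ≤ C := by simpa using (abs_nonneg _).trans (hrbound 1 (one_dvd P))
  have hG : ∑ k ∈ P.divisors.filter (fun k : ℕ => (k : ℝ) ≤ ξ),
      ∏ q ∈ k.primeFactors, g q / (1 - g q) = selbergSum g D := by
    rw [sum_divisors_le_eq_sum_sieveSets hPsq]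
    exact sum_congr rfl fun s hs => by rw [Nat.primeFactors_prod (hDprime s hs)]; rfl
  rw [hG, div_eq_mul_inv, ← selbergQuadraticForm_selbergLambda hgD isLowerSet_sieveSets]
  refine (sum_coprime_le_selbergQuadraticForm_add hDP h0 (selbergLambda_empty hgD h0) _ ha hg1
    hgmul X r hr).trans (add_le_add_right ?_ _)
  refine (sum_sum_mul_mul_le_of_abs_le_one D
    (abs_selbergLambda_le_one hgD isLowerSet_sieveSets h0)
    (F := fun s t => C * ((∏ p ∈ s ∪ t, p : ℕ) : ℝ) ^ κ) fun s hs t ht =>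
      hrbound _ (prod_dvd_of_subset_primeFactors (union_subset (hDP s hs) (hDP t ht)))).trans ?_
  simp_rw [mul_assoc]
  exact sum_sum_prod_union_le_sum_tau3 hDprime (fun s hs => (mem_sieveSets.1 hs).2)
    fun d => mul_nonneg hC (Real.rpow_nonneg d.cast_nonneg κ)

/-- The Selberg upper bound sieve: if `a_n ≥ 0` is supported on `1 ≤ n ≤ N`, `P` is a
squarefree sieving modulus, and for every `d | P` one has
`Σ_{d|n} a_n = g(d)·X + r_d` with `g` multiplicative on divisors of `P`,
`0 < g(p) < 1` for `p | P`, and `|r_d| ≤ C·d^κ`, then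
`Σ_{gcd(n,P)=1} a_n ≤ X/G(ξ) + Σ_{d ≤ ξ²} τ₃(d)·C·d^κ` where
`G(ξ) = Σ_{k ≤ ξ, k | P} μ²(k) Π_{p|k} g(p)/(1-g(p))` and `τ₃(d) = Σ_{e|d} τ(e)`. -/
theorem stmt_18 (N : ℕ) (a : ℕ → ℝ) (ha : ∀ n, 0 ≤ a n)
    (P : ℕ) (hP : 0 < P) (hPsq : Squarefree P)
    (g : ℕ → ℝ) (hg1 : g 1 = 1)
    (hgmul : ∀ d e : ℕ, d ∣ P → e ∣ P → Nat.Coprime d e → g (d * e) = g d * g e)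
    (hgp : ∀ q : ℕ, q.Prime → q ∣ P → 0 < g q ∧ g q < 1)
    (X C κ : ℝ) (hC : 0 < C) (hκ : 0 < κ)
    (r : ℕ → ℝ)
    (hr : ∀ d : ℕ, d ∣ P →
      (∑ n ∈ Finset.Icc 1 N, if d ∣ n then a n else 0) = g d * X + r d)
    (hrbound : ∀ d : ℕ, d ∣ P → |r d| ≤ C * (d : ℝ) ^ κ)
    (ξ : ℝ) (hξ : 1 ≤ ξ) :
    (∑ n ∈ Finset.Icc 1 N, if Nat.Coprime n P then a n else 0)
      ≤ X / (∑ k ∈ P.divisors.filter (fun k : ℕ => (k : ℝ) ≤ ξ),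
              ∏ q ∈ k.primeFactors, g q / (1 - g q))
        + ∑ d ∈ Finset.Icc 1 ⌊ξ ^ 2⌋₊,
            (∑ e ∈ d.divisors, (e.divisors.card : ℝ)) * C * (d : ℝ) ^ κ :=
  stmt_18_general N a ha P hPsq g hg1 hgmul hgp X C κ r hr hrbound ξ hξ
end
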